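/- arXiv:2305.17581 — 6 statements merged into one kernel-verified Lean document; each statement's English description precedes it below -/
import Mathlib

section
/- For linear regression with loss f_n(x) = (x^T a_n - b_n)^2, the gradient of the distillation loss f_n(x|θ,λ) = (1-λ)(x^T a_n - b_n)^2 + λ(x^T a_n - θ^T a_n)^2 with respect to x equals ∇f_n(x) - λ∇f_n(θ). -/
open InnerProductSpace

section RealGradient

variable {E : Type*} [NormedAddCommGroup E] [InnerProductSpace ℝ E] [CompleteSpace E]
  {f g : E → ℝ} {f' g' x : E}

theorem HasGradientAt.add (hf : HasGradientAt f f' x) (hg : HasGradientAt g g' x) :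
    HasGradientAt (fun y => f y + g y) (f' + g') x := by
  rw [hasGradientAt_iff_hasFDerivAt, map_add]
  exact hf.hasFDerivAt.add hg.hasFDerivAt

theorem HasGradientAt.const_mul (c : ℝ) (hf : HasGradientAt f f' x) :
    HasGradientAt (fun y => c * f y) (c • f') x := by
  rw [hasGradientAt_iff_hasFDerivAt, map_smul]
  exact hf.hasFDerivAt.const_mul c

theorem HasGradientAt.sq (hf : HasGradientAt f f' x) :
    HasGradientAt (fun y => f y ^ 2) ((2 * f x) • f') x := by
  rw [hasGradientAt_iff_hasFDerivAt, map_smul]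
  simpa using hf.hasFDerivAt.pow 2

theorem hasGradientAt_inner_sub_const (a : E) (c : ℝ) :
    HasGradientAt (fun y => ⟪y, a⟫_ℝ - c) a x := by
  rw [hasGradientAt_iff_hasFDerivAt]
  have h : (fun y => ⟪y, a⟫_ℝ - c) = fun y => toDual ℝ E a y - c := by
    ext y
    rw [toDual_apply_apply, real_inner_comm]
  rw [h]
  exact (toDual ℝ E a : E →L[ℝ] ℝ).hasFDerivAt.sub_const c

theorem hasGradientAt_inner_sub_const_sq (a : E) (c : ℝ) (y : E) :
    HasGradientAt (fun y => (⟪y, a⟫_ℝ - c) ^ 2) ((2 * (⟪y, a⟫_ℝ - c)) • a) y :=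
  (hasGradientAt_inner_sub_const a c).sq

end RealGradient

theorem linreg_distillation_gradient {d : ℕ}
    (a : EuclideanSpace ℝ (Fin d)) (b lam : ℝ)
    (x θ : EuclideanSpace ℝ (Fin d))
    (f : EuclideanSpace ℝ (Fin d) → ℝ)
    (hf : f = fun y => ((inner ℝ y a : ℝ) - b) ^ 2)
    (fdist : EuclideanSpace ℝ (Fin d) → ℝ)
    (hfdist : fdist = fun y => (1 - lam) * ((inner ℝ y a : ℝ) - b) ^ 2
      + lam * ((inner ℝ y a : ℝ) - (inner ℝ θ a : ℝ)) ^ 2) :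
    gradient fdist x = gradient f x - lam • gradient f θ := by
  subst hf hfdist
  have hdist := ((hasGradientAt_inner_sub_const_sq a b x).const_mul (1 - lam)).add
    ((hasGradientAt_inner_sub_const_sq a ⟪θ, a⟫_ℝ x).const_mul lam)
  rw [hdist.gradient, (hasGradientAt_inner_sub_const_sq a b x).gradient,
    (hasGradientAt_inner_sub_const_sq a b θ).gradient]
  module
end

section
/- With λ* as the minimizer of N(λ) = λ²‖∇f(θ)‖² + cγ E[‖∇f_ξ(x*) - λ∇f_ξ(θ)‖²], and assuming E[∇f_ξ(x*)] = 0, the ratio N(λ*)/N(0) equals 1 - ρ²(x*,θ)(1 - β(θ))/(1 + β(θ)/(cγ)), where β(θ) = ‖∇f(θ)‖²/E[‖∇f_ξ(θ)‖²] and ρ(x*,θ) is the correlation coefficient between ∇f_ξ(x*) and ∇f_ξ(θ). -/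
/-!
As a function of `λ`, `N` is the quadratic
`(‖g‖² + cγ E‖B‖²) λ² - 2cγ E⟨A, B⟩ λ + cγ E‖A‖²`, and `λ*` is its vertex, so
`N λ* / N 0 = 1 - E⟨A, B⟩² / (E‖A‖² (E‖B‖² + ‖g‖² / (cγ)))`. Rewriting this in terms of `ρ` and
`β` uses `E‖B‖² - ‖g‖² = E‖B - g‖²`. When this variance vanishes, `B = g` almost surely, hence
`E⟨A, B⟩ = ⟨E A, g⟩ = 0` and both sides equal `1` (there `ρ = 0` through division by zero).
-/

open MeasureTheory
open scoped RealInnerProductSpace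

section

variable {Ω E : Type*} [MeasurableSpace Ω] {μ : Measure Ω}
  [NormedAddCommGroup E] [InnerProductSpace ℝ E]

theorem integral_norm_sub_smul_sq {A B : Ω → E}
    (hA2 : Integrable (fun ω => ‖A ω‖ ^ 2) μ) (hB2 : Integrable (fun ω => ‖B ω‖ ^ 2) μ)
    (hAB : Integrable (fun ω => ⟪A ω, B ω⟫) μ) (t : ℝ) :
    ∫ ω, ‖A ω - t • B ω‖ ^ 2 ∂μ =
      ∫ ω, ‖A ω‖ ^ 2 ∂μ - 2 * t * ∫ ω, ⟪A ω, B ω⟫ ∂μ + t ^ 2 * ∫ ω, ‖B ω‖ ^ 2 ∂μ := by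
  have hexpand (ω : Ω) : ‖A ω - t • B ω‖ ^ 2 =
      ‖A ω‖ ^ 2 - 2 * t * ⟪A ω, B ω⟫ + t ^ 2 * ‖B ω‖ ^ 2 := by
    rw [norm_sub_sq_real, real_inner_smul_right, norm_smul, mul_pow, Real.norm_eq_abs, sq_abs]
    ring
  simp only [hexpand]
  rw [integral_add _ (hB2.const_mul _), integral_sub hA2 (hAB.const_mul _), integral_const_mul,
    integral_const_mul]
  exact hA2.sub (hAB.const_mul _)

theorem integral_inner_eq_zero_of_ae_eq_const [CompleteSpace E] {A B : Ω → E} {v : E}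
    (hA : Integrable A μ) (hA0 : ∫ ω, A ω ∂μ = 0) (hB : B =ᵐ[μ] fun _ => v) :
    ∫ ω, ⟪A ω, B ω⟫ ∂μ = 0 := by
  calc ∫ ω, ⟪A ω, B ω⟫ ∂μ = ∫ ω, ⟪v, A ω⟫ ∂μ :=
        integral_congr_ae <| hB.mono fun ω hω => by dsimp only at hω ⊢; rw [hω, real_inner_comm]
    _ = 0 := by rw [integral_inner hA, hA0, inner_zero_right]

variable [CompleteSpace E] [IsProbabilityMeasure μ]

theorem integral_norm_sub_integral_sq {B : Ω → E} (hB : Integrable B μ)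
    (hB2 : Integrable (fun ω => ‖B ω‖ ^ 2) μ) :
    ∫ ω, ‖B ω - ∫ ω', B ω' ∂μ‖ ^ 2 ∂μ = ∫ ω, ‖B ω‖ ^ 2 ∂μ - ‖∫ ω, B ω ∂μ‖ ^ 2 := by
  set g := ∫ ω, B ω ∂μ
  have h := integral_norm_sub_smul_sq (μ := μ) (B := fun _ => g) hB2 (integrable_const _)
    (hB.inner_const g) 1
  have hBg : ∫ ω, ⟪B ω, g⟫ ∂μ = ‖g‖ ^ 2 := by
    simp_rw [real_inner_comm g]
    rw [integral_inner hB, real_inner_self_eq_norm_sq]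
  simp only [one_smul, hBg, integral_const, probReal_univ] at h
  rw [h]
  ring

theorem sq_norm_integral_le_integral_sq_norm {B : Ω → E} (hB : Integrable B μ)
    (hB2 : Integrable (fun ω => ‖B ω‖ ^ 2) μ) :
    ‖∫ ω, B ω ∂μ‖ ^ 2 ≤ ∫ ω, ‖B ω‖ ^ 2 ∂μ :=
  sub_nonneg.1 <| integral_norm_sub_integral_sq hB hB2 ▸ integral_nonneg fun _ => sq_nonneg _

theorem ae_eq_integral_of_integral_sq_norm_eq {B : Ω → E} (hB : Integrable B μ)
    (hB2 : Integrable (fun ω => ‖B ω‖ ^ 2) μ)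
    (h : ∫ ω, ‖B ω‖ ^ 2 ∂μ = ‖∫ ω, B ω ∂μ‖ ^ 2) :
    B =ᵐ[μ] fun _ => ∫ ω, B ω ∂μ := by
  have hint : Integrable (fun ω => ‖B ω - ∫ ω', B ω' ∂μ‖ ^ 2) μ :=
    (memLp_two_iff_integrable_sq_norm (hB.1.sub aestronglyMeasurable_const)).1
      (((memLp_two_iff_integrable_sq_norm hB.1).2 hB2).sub (memLp_const _))
  have hzero := (integral_eq_zero_iff_of_nonneg (fun ω => sq_nonneg _) hint).1
    (by rw [integral_norm_sub_integral_sq hB hB2, h, sub_self])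
  filter_upwards [hzero] with ω hω
  simpa [sub_eq_zero] using hω

end

theorem quadratic_cost_ratio {a b s G k : ℝ} (ha : 0 < a) (hk : 0 < k) (hG : 0 ≤ G) (hGb : G ≤ b)
    (hs : b = G → s = 0) (N : ℝ → ℝ)
    (hN : N = fun t => t ^ 2 * G + k * (a - 2 * t * s + t ^ 2 * b)) :
    N (s / (b + 1 / k * G)) / N 0 =
      1 - (s / (√a * √(b - G))) ^ 2 * (1 - G / b) / (1 + G / b / k) := by
  subst hN
  rcases hGb.lt_or_eq with hlt | heq
  · have hb : 0 < b := hG.trans_lt hlt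
    rw [div_pow, mul_pow, Real.sq_sqrt ha.le, Real.sq_sqrt (sub_nonneg.2 hGb)]
    field_simp
    ring
  · simp [hs heq.symm, hk.ne', ha.ne']

theorem variance_reduction_ratio_general {d : ℕ} {Ω : Type*} [MeasureSpace Ω]
    (μ : Measure Ω) [IsProbabilityMeasure μ]
    -- A ω = ∇f_ξ(x*), B ω = ∇f_ξ(θ)
    (A B : Ω → EuclideanSpace ℝ (Fin d))
    (hA2 : Integrable (fun ω => ‖A ω‖ ^ 2) μ)
    (hB2 : Integrable (fun ω => ‖B ω‖ ^ 2) μ)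
    (hAB : Integrable (fun ω => (inner ℝ (A ω) (B ω) : ℝ)) μ)
    (hAint : Integrable A μ) (hBint : Integrable B μ)
    (hAmean : ∫ ω, A ω ∂μ = 0)
    (g : EuclideanSpace ℝ (Fin d)) (hg : g = ∫ ω, B ω ∂μ)
    (hApos : 0 < ∫ ω, ‖A ω‖ ^ 2 ∂μ)
    (c γ : ℝ) (hc : 0 < c) (hγ : 0 < γ)
    (N : ℝ → ℝ)
    (hN : N = fun lam => lam ^ 2 * ‖g‖ ^ 2 + c * γ * ∫ ω, ‖A ω - lam • B ω‖ ^ 2 ∂μ)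
    (lamstar : ℝ)
    (hlamstar : lamstar = (∫ ω, (inner ℝ (A ω) (B ω) : ℝ) ∂μ) /
      ((∫ ω, ‖B ω‖ ^ 2 ∂μ) + (1 / (c * γ)) * ‖g‖ ^ 2))
    (β : ℝ) (hβ : β = ‖g‖ ^ 2 / ∫ ω, ‖B ω‖ ^ 2 ∂μ)
    (ρ : ℝ) (hρ : ρ = (∫ ω, (inner ℝ (A ω) (B ω) : ℝ) ∂μ) /
      (Real.sqrt (∫ ω, ‖A ω‖ ^ 2 ∂μ) *
       Real.sqrt ((∫ ω, ‖B ω‖ ^ 2 ∂μ) - ‖g‖ ^ 2))) :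
    N lamstar / N 0 = 1 - ρ ^ 2 * (1 - β) / (1 + β / (c * γ)) := by
  have hG : ‖g‖ ^ 2 ≤ ∫ ω, ‖B ω‖ ^ 2 ∂μ := hg ▸ sq_norm_integral_le_integral_sq_norm hBint hB2
  have hdeg (h : ∫ ω, ‖B ω‖ ^ 2 ∂μ = ‖g‖ ^ 2) : ∫ ω, ⟪A ω, B ω⟫ ∂μ = 0 :=
    integral_inner_eq_zero_of_ae_eq_const hAint hAmean
      (ae_eq_integral_of_integral_sq_norm_eq hBint hB2 (hg ▸ h))
  subst hlamstar hβ hρ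
  refine quadratic_cost_ratio hApos (mul_pos hc hγ) (by positivity) hG hdeg N ?_
  simp only [hN, integral_norm_sub_smul_sq hA2 hB2 hAB]

theorem variance_reduction_ratio {d : ℕ} {Ω : Type*} [MeasureSpace Ω]
    (μ : Measure Ω) [IsProbabilityMeasure μ]
    -- A ω = ∇f_ξ(x*), B ω = ∇f_ξ(θ)
    (A B : Ω → EuclideanSpace ℝ (Fin d))
    (hA2 : Integrable (fun ω => ‖A ω‖ ^ 2) μ)
    (hB2 : Integrable (fun ω => ‖B ω‖ ^ 2) μ)
    (hAB : Integrable (fun ω => (inner ℝ (A ω) (B ω) : ℝ)) μ)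
    (hAint : Integrable A μ) (hBint : Integrable B μ)
    (hAmean : ∫ ω, A ω ∂μ = 0)
    (g : EuclideanSpace ℝ (Fin d)) (hg : g = ∫ ω, B ω ∂μ)
    (hApos : 0 < ∫ ω, ‖A ω‖ ^ 2 ∂μ)
    (hBpos : 0 < ∫ ω, ‖B ω‖ ^ 2 ∂μ)
    (c γ : ℝ) (hc : 0 < c) (hγ : 0 < γ)
    (N : ℝ → ℝ)
    (hN : N = fun lam => lam ^ 2 * ‖g‖ ^ 2 + c * γ * ∫ ω, ‖A ω - lam • B ω‖ ^ 2 ∂μ)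
    (lamstar : ℝ)
    (hlamstar : lamstar = (∫ ω, (inner ℝ (A ω) (B ω) : ℝ) ∂μ) /
      ((∫ ω, ‖B ω‖ ^ 2 ∂μ) + (1 / (c * γ)) * ‖g‖ ^ 2))
    (β : ℝ) (hβ : β = ‖g‖ ^ 2 / ∫ ω, ‖B ω‖ ^ 2 ∂μ)
    (ρ : ℝ) (hρ : ρ = (∫ ω, (inner ℝ (A ω) (B ω) : ℝ) ∂μ) /
      (Real.sqrt (∫ ω, ‖A ω‖ ^ 2 ∂μ) *
       Real.sqrt ((∫ ω, ‖B ω‖ ^ 2 ∂μ) - ‖g‖ ^ 2))) :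
    N lamstar / N 0 = 1 - ρ ^ 2 * (1 - β) / (1 + β / (c * γ)) :=
  variance_reduction_ratio_general μ A B hA2 hB2 hAB hAint hBint hAmean g hg hApos c γ hc hγ N hN
    lamstar hlamstar β hβ ρ hρ
end

section
/- Under strong quasi-convexity with parameter μ and expected smoothness with constant L_exp, the self-distillation SGD iterates x^{t+1} = x^t - γ(∇f_ξ(x^t) - λ∇f_ξ(θ)) with step size γ ≤ 1/(8 L_exp) satisfy the one-step descent inequality E_t[‖x^{t+1} - x*‖²] ≤ (1-γμ)‖x^t - x*‖² + (8γ/μ)λ²‖∇f(θ)‖² + 2γ² E[‖∇f_ξ(x*) - λ∇f_ξ(θ)‖²]. -/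
/-!
Expanding the square splits `E‖x⁺ - x*‖²` into `‖x - x*‖²`, a cross term and `γ²` times the
second moment of the step direction. Strong quasi-convexity bounds `⟪x - x*, ∇f x⟫` below by
`f x - f* + (μ/2)‖x - x*‖²`, Young's inequality with weight `μ/8` controls the `λ∇f θ` part,
and expected smoothness bounds the second moment by `4 L_exp (f x - f*)` plus twice the noise at
`x*`. Since `γ L_exp ≤ 1/8`, the function gap absorbs the `L_exp` term and, through quadratic
growth `f x - f* ≥ (μ/4)‖x - x*‖²`, the leftover `(γμ/8)‖x - x*‖²` from Young's inequality.
-/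

open MeasureTheory

lemma two_mul_le_mul_sq_add_sq_div {ε : ℝ} (hε : 0 < ε) (a b : ℝ) :
    2 * a * b ≤ ε * a ^ 2 + b ^ 2 / ε := by
  have hsq : ε * a ^ 2 + b ^ 2 / ε - 2 * a * b = (ε * a - b) ^ 2 / ε := by
    field_simp
    ring
  have : 0 ≤ (ε * a - b) ^ 2 / ε := by positivity
  linarith

lemma half_mul_le_sub_of_mul_le_deriv {φ φ' : ℝ → ℝ} {c : ℝ}
    (hφ : ∀ s, HasDerivAt φ (φ' s) s) (hφ' : ∀ s ∈ Set.Ioo (0 : ℝ) 1, c * s ≤ φ' s) :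
    c / 2 ≤ φ 1 - φ 0 := by
  have hψ : ∀ s, HasDerivAt (fun s => φ s - c / 2 * s ^ 2) (φ' s - c * s) s := fun s =>
    ((hφ s).sub ((hasDerivAt_pow 2 s).const_mul (c / 2))).congr_deriv (by push_cast; ring)
  have hmono : MonotoneOn (fun s => φ s - c / 2 * s ^ 2) (Set.Icc 0 1) := by
    refine monotoneOn_of_hasDerivWithinAt_nonneg (convex_Icc 0 1)
      (fun s _ => (hψ s).continuousAt.continuousWithinAt)
      (fun s _ => (hψ s).hasDerivWithinAt) fun s hs => ?_
    rw [interior_Icc] at hs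
    exact sub_nonneg.2 (hφ' s hs)
  have := hmono (Set.left_mem_Icc.2 zero_le_one) (Set.right_mem_Icc.2 zero_le_one) zero_le_one
  simp only at this
  linarith

section NormedAddCommGroup

variable {E Ω : Type*} [NormedAddCommGroup E] [MeasurableSpace Ω] {P : Measure Ω}

lemma integral_norm_sq_le_two_mul_integral_norm_sub_sq_add {X Y : Ω → E}
    (hX : MemLp X 2 P) (hY : MemLp Y 2 P) :
    ∫ ω, ‖X ω‖ ^ 2 ∂P ≤ 2 * ∫ ω, ‖X ω - Y ω‖ ^ 2 ∂P + 2 * ∫ ω, ‖Y ω‖ ^ 2 ∂P := by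
  have hXY : Integrable (fun ω => ‖X ω - Y ω‖ ^ 2) P :=
    (hX.sub hY).integrable_norm_pow two_ne_zero
  have hY2 : Integrable (fun ω => ‖Y ω‖ ^ 2) P := hY.integrable_norm_pow two_ne_zero
  rw [← integral_const_mul, ← integral_const_mul,
    ← integral_add (hXY.const_mul 2) (hY2.const_mul 2)]
  refine integral_mono (hX.integrable_norm_pow two_ne_zero)
    ((hXY.const_mul 2).add (hY2.const_mul 2)) fun ω => ?_
  calc ‖X ω‖ ^ 2 ≤ (‖Y ω‖ + ‖X ω - Y ω‖) ^ 2 :=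
        pow_le_pow_left₀ (norm_nonneg _) (norm_le_insert' (X ω) (Y ω)) 2
    _ ≤ 2 * ‖X ω - Y ω‖ ^ 2 + 2 * ‖Y ω‖ ^ 2 := by
        linarith [add_sq_le (a := ‖Y ω‖) (b := ‖X ω - Y ω‖)]

end NormedAddCommGroup

section InnerProductSpace

variable {E : Type*} [NormedAddCommGroup E] [InnerProductSpace ℝ E]

lemma two_mul_real_inner_le (u w : E) {ε : ℝ} (hε : 0 < ε) :
    2 * inner ℝ u w ≤ ε * ‖u‖ ^ 2 + ‖w‖ ^ 2 / ε :=
  calc 2 * inner ℝ u w ≤ 2 * ‖u‖ * ‖w‖ := by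
        rw [mul_assoc]; exact mul_le_mul_of_nonneg_left (real_inner_le_norm u w) two_pos.le
    _ ≤ ε * ‖u‖ ^ 2 + ‖w‖ ^ 2 / ε := two_mul_le_mul_sq_add_sq_div hε _ _

variable {Ω : Type*} [MeasurableSpace Ω] {P : Measure Ω}

lemma integral_norm_sub_smul_sq_s6 [CompleteSpace E] [IsProbabilityMeasure P] {X : Ω → E}
    (hX : Integrable X P) (hX2 : Integrable (fun ω => ‖X ω‖ ^ 2) P) (c : E) (γ : ℝ) :
    ∫ ω, ‖c - γ • X ω‖ ^ 2 ∂P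
      = ‖c‖ ^ 2 - 2 * γ * inner ℝ c (∫ ω, X ω ∂P) + γ ^ 2 * ∫ ω, ‖X ω‖ ^ 2 ∂P := by
  have hexpand : ∀ ω, ‖c - γ • X ω‖ ^ 2
      = ‖c‖ ^ 2 - 2 * γ * inner ℝ c (X ω) + γ ^ 2 * ‖X ω‖ ^ 2 := fun ω => by
    rw [norm_sub_sq_real, real_inner_smul_right, norm_smul, mul_pow, Real.norm_eq_abs, sq_abs]
    ring
  have hinner : Integrable (fun ω => 2 * γ * inner ℝ c (X ω)) P := (hX.const_inner c).const_mul _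
  have hlin : Integrable (fun ω => ‖c‖ ^ 2 - 2 * γ * inner ℝ c (X ω)) P :=
    (integrable_const _).sub hinner
  simp_rw [hexpand]
  rw [integral_add hlin (hX2.const_mul _),
    integral_sub (integrable_const _) hinner, integral_const_mul, integral_const_mul,
    integral_inner hX, integral_const, probReal_univ, one_smul]

variable [CompleteSpace E]

def StronglyQuasiConvexAt (f : E → ℝ) (μ : ℝ) (xstar : E) : Prop :=
  ∀ x, f xstar ≥ f x + inner ℝ (gradient f x) (xstar - x) + μ / 2 * ‖xstar - x‖ ^ 2

namespace StronglyQuasiConvexAt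

variable {f : E → ℝ} {μ : ℝ} {xstar : E}

lemma sub_add_le_inner_gradient (hqc : StronglyQuasiConvexAt f μ xstar) (x : E) :
    f x - f xstar + μ / 2 * ‖x - xstar‖ ^ 2 ≤ inner ℝ (x - xstar) (gradient f x) := by
  have h := hqc x
  rw [← neg_sub x xstar, inner_neg_right, norm_neg, real_inner_comm] at h
  linarith

lemma quadratic_growth (hqc : StronglyQuasiConvexAt f μ xstar) (hdiff : Differentiable ℝ f)
    (hmin : ∀ y, f xstar ≤ f y) (x : E) :
    μ / 4 * ‖x - xstar‖ ^ 2 ≤ f x - f xstar := by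
  set v := x - xstar
  have hline : ∀ s : ℝ, HasDerivAt (fun s : ℝ => f (xstar + s • v))
      (inner ℝ (gradient f (xstar + s • v)) v) s := fun s =>
    ((hdiff _).hasGradientAt.hasFDerivAt.comp_hasDerivAt s
      (((hasDerivAt_id s).smul_const v).const_add xstar)).congr_deriv (by rw [one_smul]; rfl)
  have hslope : ∀ s ∈ Set.Ioo (0 : ℝ) 1,
      μ / 2 * ‖v‖ ^ 2 * s ≤ inner ℝ (gradient f (xstar + s • v)) v := by
    rintro s ⟨hs, -⟩
    have h := hqc (xstar + s • v)
    rw [sub_add_cancel_left, inner_neg_right, real_inner_smul_right, norm_neg, norm_smul,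
      mul_pow, Real.norm_eq_abs, sq_abs] at h
    have := hmin (xstar + s • v)
    refine le_of_mul_le_mul_left ?_ hs
    nlinarith
  have := half_mul_le_sub_of_mul_le_deriv hline hslope
  simp only [one_smul, zero_smul, add_zero, v, add_sub_cancel] at this
  linarith

end StronglyQuasiConvexAt

end InnerProductSpace

theorem sd_sgd_one_step_str_quasi_cvx_general {d : ℕ} {Ω : Type*} [MeasureSpace Ω]
    (P : Measure Ω) [IsProbabilityMeasure P]
    (f : EuclideanSpace ℝ (Fin d) → ℝ) (hdiff : Differentiable ℝ f)
    (μ Lexp γ lam : ℝ) (hμ : 0 < μ)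
    (hγ : 0 < γ) (hγle : γ ≤ 1 / (8 * Lexp))
    (xstar : EuclideanSpace ℝ (Fin d)) (hmin : ∀ y, f xstar ≤ f y)
    -- strong quasi-convexity
    (hqc : ∀ x, f xstar ≥ f x + (inner ℝ (gradient f x) (xstar - x) : ℝ)
      + μ / 2 * ‖xstar - x‖ ^ 2)
    -- stochastic gradient oracle
    (G : Ω → EuclideanSpace ℝ (Fin d) → EuclideanSpace ℝ (Fin d))
    (hGint : ∀ x, Integrable (fun ω => G ω x) P)
    (hG2int : ∀ x y : EuclideanSpace ℝ (Fin d),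
      Integrable (fun ω => ‖G ω x - lam • G ω y‖ ^ 2) P)
    (hunbiased : ∀ x, ∫ ω, G ω x ∂P = gradient f x)
    -- expected smoothness
    (hES : ∀ x, ∫ ω, ‖G ω x - G ω xstar‖ ^ 2 ∂P ≤ 2 * Lexp * (f x - f xstar))
    (θ xt : EuclideanSpace ℝ (Fin d)) :
    ∫ ω, ‖xt - γ • (G ω xt - lam • G ω θ) - xstar‖ ^ 2 ∂P
      ≤ (1 - γ * μ) * ‖xt - xstar‖ ^ 2
        + (8 * γ / μ) * lam ^ 2 * ‖gradient f θ‖ ^ 2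
        + 2 * γ ^ 2 * ∫ ω, ‖G ω xstar - lam • G ω θ‖ ^ 2 ∂P := by
  have hL2 : ∀ x y, MemLp (fun ω => G ω x - lam • G ω y) 2 P := fun x y =>
    (memLp_two_iff_integrable_sq_norm
      ((hGint x).sub ((hGint y).smul lam)).aestronglyMeasurable).2 (hG2int x y)
  have hmean : ∫ ω, (G ω xt - lam • G ω θ) ∂P = gradient f xt - lam • gradient f θ := by
    have hθ : Integrable (fun ω => lam • G ω θ) P := (hGint θ).smul lam
    rw [integral_sub (hGint xt) hθ, integral_smul, hunbiased, hunbiased]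
  have hexpand : ∫ ω, ‖xt - γ • (G ω xt - lam • G ω θ) - xstar‖ ^ 2 ∂P
      = ‖xt - xstar‖ ^ 2 - 2 * γ * inner ℝ (xt - xstar) (gradient f xt - lam • gradient f θ)
        + γ ^ 2 * ∫ ω, ‖G ω xt - lam • G ω θ‖ ^ 2 ∂P := by
    simp_rw [sub_right_comm xt _ xstar]
    rw [integral_norm_sub_smul_sq_s6 ((hL2 xt θ).integrable one_le_two) (hG2int xt θ), hmean]
  have hsecond : ∫ ω, ‖G ω xt - lam • G ω θ‖ ^ 2 ∂P
      ≤ 4 * Lexp * (f xt - f xstar) + 2 * ∫ ω, ‖G ω xstar - lam • G ω θ‖ ^ 2 ∂P := by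
    have h := integral_norm_sq_le_two_mul_integral_norm_sub_sq_add (hL2 xt θ) (hL2 xstar θ)
    simp only [sub_sub_sub_cancel_right] at h
    linarith [hES xt]
  have hdescent := StronglyQuasiConvexAt.sub_add_le_inner_gradient hqc xt
  have hgrowth := StronglyQuasiConvexAt.quadratic_growth hqc hdiff hmin xt
  have hyoung :=
    two_mul_real_inner_le (xt - xstar) (lam • gradient f θ) (by positivity : 0 < μ / 8)
  rw [norm_smul, mul_pow, Real.norm_eq_abs, sq_abs] at hyoung
  have hgap : 0 ≤ f xt - f xstar := sub_nonneg.2 (hmin xt)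
  have hγL : γ * Lexp ≤ 1 / 8 := by
    have h8 : 0 < 8 * Lexp := one_div_pos.1 (hγ.trans_le hγle)
    have := (le_div_iff₀ h8).1 hγle
    linarith
  rw [hexpand, inner_sub_right]
  linear_combination (2 * γ) * hdescent + γ * hyoung + γ ^ 2 * hsecond
    + (4 * γ * (f xt - f xstar)) * hγL + (γ / 2) * hgrowth + γ * hgap

theorem sd_sgd_one_step_str_quasi_cvx {d : ℕ} {Ω : Type*} [MeasureSpace Ω]
    (P : Measure Ω) [IsProbabilityMeasure P]
    (f : EuclideanSpace ℝ (Fin d) → ℝ) (hdiff : Differentiable ℝ f)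
    (μ Lexp γ lam : ℝ) (hμ : 0 < μ) (hLexp : 0 < Lexp)
    (hγ : 0 < γ) (hγle : γ ≤ 1 / (8 * Lexp))
    (xstar : EuclideanSpace ℝ (Fin d)) (hmin : ∀ y, f xstar ≤ f y)
    -- strong quasi-convexity
    (hqc : ∀ x, f xstar ≥ f x + (inner ℝ (gradient f x) (xstar - x) : ℝ)
      + μ / 2 * ‖xstar - x‖ ^ 2)
    -- stochastic gradient oracle
    (G : Ω → EuclideanSpace ℝ (Fin d) → EuclideanSpace ℝ (Fin d))
    (hGint : ∀ x, Integrable (fun ω => G ω x) P)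
    (hG2int : ∀ x y : EuclideanSpace ℝ (Fin d),
      Integrable (fun ω => ‖G ω x - lam • G ω y‖ ^ 2) P)
    (hunbiased : ∀ x, ∫ ω, G ω x ∂P = gradient f x)
    -- expected smoothness
    (hES : ∀ x, ∫ ω, ‖G ω x - G ω xstar‖ ^ 2 ∂P ≤ 2 * Lexp * (f x - f xstar))
    (θ xt : EuclideanSpace ℝ (Fin d)) :
    ∫ ω, ‖xt - γ • (G ω xt - lam • G ω θ) - xstar‖ ^ 2 ∂P
      ≤ (1 - γ * μ) * ‖xt - xstar‖ ^ 2
        + (8 * γ / μ) * lam ^ 2 * ‖gradient f θ‖ ^ 2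
        + 2 * γ ^ 2 * ∫ ω, ‖G ω xstar - lam • G ω θ‖ ^ 2 ∂P :=
  sd_sgd_one_step_str_quasi_cvx_general P f hdiff μ Lexp γ lam hμ hγ hγle xstar hmin hqc G hGint
    hG2int hunbiased hES θ xt
end

section
/- If f satisfies the PL condition with parameter μ and is L-smooth, and the stochastic gradients satisfy expected smoothness with constant L_exp, then the self-distillation iterates x^{t+1} = x^t - γ(∇f_ξ(x^t) - λ∇f_ξ(θ)) with γ ≤ μ/(4 L_exp L) satisfy E_t[f(x^{t+1}) - f*] ≤ (1-γμ)(f(x^t) - f*) + γλ²‖∇f(θ)‖² + Lγ² E[‖∇f_ξ(x*) - λ∇f_ξ(θ)‖²]. -/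
/-!
Apply the smoothness upper bound at `xt` along the stochastic step and take expectations.
Unbiasedness turns the linear term into `⟪∇f xt, ∇f xt - λ ∇f θ⟫`, and Young's inequality bounds
the cross term `λ ⟪∇f xt, ∇f θ⟫` by `‖∇f xt‖² / 4 + λ² ‖∇f θ‖²`. Splitting the step through `x*`
as `(G xt - G x*) + (G x* - λ G θ)`, expected smoothness bounds its second moment by
`4 Lexp (f xt - f*) + 2 E‖G x* - λ G θ‖²`. By PL the remaining `-(3/4) γ ‖∇f xt‖²` is at most
`-(3/2) γ μ (f xt - f*)`, and the step-size condition `4 Lexp L γ ≤ μ` makes the variance term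
`2 L Lexp γ² (f xt - f*)` at most `(1/2) γ μ (f xt - f*)`.
-/

open MeasureTheory

theorem norm_add_sq_le_two_mul {E : Type*} [SeminormedAddCommGroup E] (a b : E) :
    ‖a + b‖ ^ 2 ≤ 2 * (‖a‖ ^ 2 + ‖b‖ ^ 2) :=
  (pow_le_pow_left₀ (norm_nonneg _) (norm_add_le a b) 2).trans add_sq_le

theorem mul_inner_le_norm_sq_div_four_add {E : Type*} [SeminormedAddCommGroup E]
    [InnerProductSpace ℝ E] (c : ℝ) (u v : E) :
    c * inner ℝ u v ≤ ‖u‖ ^ 2 / 4 + c ^ 2 * ‖v‖ ^ 2 := by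
  have h : c * inner ℝ u v ≤ |c| * (‖u‖ * ‖v‖) := calc
    c * inner ℝ u v ≤ |c| * |inner ℝ u v| := (le_abs_self _).trans_eq (abs_mul _ _)
    _ ≤ |c| * (‖u‖ * ‖v‖) := by gcongr; exact abs_real_inner_le_norm u v
  nlinarith [sq_nonneg (‖u‖ / 2 - |c| * ‖v‖), sq_abs c]

theorem integral_norm_add_sq_le {Ω E : Type*} [MeasurableSpace Ω] {P : Measure Ω}
    [NormedAddCommGroup E] {a b : Ω → E} (ha : MemLp a 2 P) (hb : MemLp b 2 P) :
    ∫ ω, ‖a ω + b ω‖ ^ 2 ∂P ≤ 2 * (∫ ω, ‖a ω‖ ^ 2 ∂P + ∫ ω, ‖b ω‖ ^ 2 ∂P) := by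
  have ha2 : Integrable (fun ω => ‖a ω‖ ^ 2) P := ha.integrable_norm_pow two_ne_zero
  have hb2 : Integrable (fun ω => ‖b ω‖ ^ 2) P := hb.integrable_norm_pow two_ne_zero
  rw [← integral_add ha2 hb2, ← integral_const_mul]
  exact integral_mono ((ha.add hb).integrable_norm_pow two_ne_zero)
    ((ha2.add hb2).const_mul 2) fun ω => norm_add_sq_le_two_mul (a ω) (b ω)

section Descent

variable {E : Type*} [NormedAddCommGroup E] [InnerProductSpace ℝ E] [CompleteSpace E]
  {f : E → ℝ} {L : ℝ}

theorem apply_sub_smul_le_of_smooth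
    (hsmooth : ∀ x y, f y ≤ f x + inner ℝ (gradient f x) (y - x) + L / 2 * ‖y - x‖ ^ 2)
    (x v : E) (γ : ℝ) :
    f (x - γ • v) ≤ f x - γ * inner ℝ (gradient f x) v + L / 2 * γ ^ 2 * ‖v‖ ^ 2 := by
  have h := hsmooth x (x - γ • v)
  rwa [sub_sub_cancel_left, inner_neg_right, real_inner_smul_right, norm_neg, norm_smul,
    mul_pow, Real.norm_eq_abs, sq_abs, ← sub_eq_add_neg, ← mul_assoc] at h

theorem integral_apply_sub_smul_le_of_smooth {Ω : Type*} [MeasurableSpace Ω] {P : Measure Ω}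
    [IsProbabilityMeasure P]
    (hsmooth : ∀ x y, f y ≤ f x + inner ℝ (gradient f x) (y - x) + L / 2 * ‖y - x‖ ^ 2)
    (x : E) (γ : ℝ) {g : Ω → E} (hg : MemLp g 2 P)
    (hf : Integrable (fun ω => f (x - γ • g ω)) P) :
    ∫ ω, f (x - γ • g ω) ∂P
      ≤ f x - γ * inner ℝ (gradient f x) (∫ ω, g ω ∂P) + L / 2 * γ ^ 2 * ∫ ω, ‖g ω‖ ^ 2 ∂P := by
  have hg1 : Integrable g P := hg.integrable one_le_two
  have hinner : Integrable (fun ω => γ * inner ℝ (gradient f x) (g ω)) P :=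
    (hg1.const_inner _).const_mul γ
  have hlin : Integrable (fun ω => f x - γ * inner ℝ (gradient f x) (g ω)) P :=
    (integrable_const _).sub hinner
  have hquad : Integrable (fun ω => L / 2 * γ ^ 2 * ‖g ω‖ ^ 2) P :=
    (hg.integrable_norm_pow two_ne_zero).const_mul _
  calc ∫ ω, f (x - γ • g ω) ∂P
      ≤ ∫ ω, (f x - γ * inner ℝ (gradient f x) (g ω) + L / 2 * γ ^ 2 * ‖g ω‖ ^ 2) ∂P :=
        integral_mono hf (hlin.add hquad) fun ω => apply_sub_smul_le_of_smooth hsmooth x (g ω) γ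
    _ = _ := by
        rw [integral_add hlin hquad, integral_sub (integrable_const _) hinner, integral_const,
          integral_const_mul, integral_const_mul, integral_inner hg1]
        simp

end Descent

section SecondMoment

variable {Ω X E : Type*} [MeasurableSpace Ω] {P : Measure Ω} [NormedAddCommGroup E]
  [NormedSpace ℝ E] {G : Ω → X → E} {c : ℝ}

theorem memLp_two_sub_smul (hGint : ∀ x, Integrable (fun ω => G ω x) P)
    (hG2int : ∀ x y, Integrable (fun ω => ‖G ω x - c • G ω y‖ ^ 2) P) (x y : X) :
    MemLp (fun ω => G ω x - c • G ω y) 2 P :=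
  (memLp_two_iff_integrable_sq_norm
    ((hGint x).sub ((hGint y).smul c)).aestronglyMeasurable).2 (hG2int x y)

theorem integral_norm_sub_smul_sq_le (hGint : ∀ x, Integrable (fun ω => G ω x) P)
    (hG2int : ∀ x y, Integrable (fun ω => ‖G ω x - c • G ω y‖ ^ 2) P) (x z y : X) :
    ∫ ω, ‖G ω x - c • G ω y‖ ^ 2 ∂P
      ≤ 2 * (∫ ω, ‖G ω x - G ω z‖ ^ 2 ∂P + ∫ ω, ‖G ω z - c • G ω y‖ ^ 2 ∂P) := by
  have hz := memLp_two_sub_smul hGint hG2int z y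
  have h := integral_norm_add_sq_le ((memLp_two_sub_smul hGint hG2int x y).sub hz) hz
  simpa only [Pi.sub_apply, sub_sub_sub_cancel_right, sub_add_sub_cancel] using h

end SecondMoment

theorem sd_sgd_one_step_pl_general {d : ℕ} {Ω : Type*} [MeasureSpace Ω]
    (P : Measure Ω) [IsProbabilityMeasure P]
    (f : EuclideanSpace ℝ (Fin d) → ℝ)
    (μ L Lexp γ lam : ℝ) (hL : 0 < L) (hLexp : 0 < Lexp)
    (hγ : 0 < γ) (hγle : γ ≤ μ / (4 * Lexp * L))
    (xstar : EuclideanSpace ℝ (Fin d)) (hmin : ∀ y, f xstar ≤ f y)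
    -- L-smoothness
    (hsmooth : ∀ x y, f y ≤ f x + (inner ℝ (gradient f x) (y - x) : ℝ)
      + L / 2 * ‖y - x‖ ^ 2)
    -- PL condition
    (hPL : ∀ x, ‖gradient f x‖ ^ 2 ≥ 2 * μ * (f x - f xstar))
    (G : Ω → EuclideanSpace ℝ (Fin d) → EuclideanSpace ℝ (Fin d))
    (hGint : ∀ x, Integrable (fun ω => G ω x) P)
    (hG2int : ∀ x y : EuclideanSpace ℝ (Fin d),
      Integrable (fun ω => ‖G ω x - lam • G ω y‖ ^ 2) P)
    (hunbiased : ∀ x, ∫ ω, G ω x ∂P = gradient f x)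
    (hES : ∀ x, ∫ ω, ‖G ω x - G ω xstar‖ ^ 2 ∂P ≤ 2 * Lexp * (f x - f xstar))
    (θ xt : EuclideanSpace ℝ (Fin d))
    (hfint : Integrable (fun ω => f (xt - γ • (G ω xt - lam • G ω θ))) P) :
    ∫ ω, (f (xt - γ • (G ω xt - lam • G ω θ)) - f xstar) ∂P
      ≤ (1 - γ * μ) * (f xt - f xstar)
        + γ * lam ^ 2 * ‖gradient f θ‖ ^ 2
        + L * γ ^ 2 * ∫ ω, ‖G ω xstar - lam • G ω θ‖ ^ 2 ∂P := by
  have hgap : 0 ≤ f xt - f xstar := sub_nonneg.2 (hmin xt)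
  have hstep : γ * (4 * Lexp * L) ≤ μ := (le_div_iff₀ (by positivity)).1 hγle
  have hmean : ∫ ω, (G ω xt - lam • G ω θ) ∂P = gradient f xt - lam • gradient f θ := by
    have hθ : Integrable (fun ω => lam • G ω θ) P := (hGint θ).smul lam
    rw [integral_sub (hGint xt) hθ, integral_smul, hunbiased, hunbiased]
  have hdescent := integral_apply_sub_smul_le_of_smooth hsmooth xt γ
    (memLp_two_sub_smul hGint hG2int xt θ) hfint
  rw [hmean, inner_sub_right, real_inner_smul_right, real_inner_self_eq_norm_sq] at hdescent
  have hmoment : ∫ ω, ‖G ω xt - lam • G ω θ‖ ^ 2 ∂P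
      ≤ 2 * (2 * Lexp * (f xt - f xstar) + ∫ ω, ‖G ω xstar - lam • G ω θ‖ ^ 2 ∂P) := by
    linarith [integral_norm_sub_smul_sq_le hGint hG2int xt xstar θ, hES xt]
  have hyoung := mul_inner_le_norm_sq_div_four_add lam (gradient f xt) (gradient f θ)
  rw [integral_sub hfint (integrable_const _), integral_const, probReal_univ, one_smul]
  linarith [mul_le_mul_of_nonneg_left hyoung hγ.le,
    mul_le_mul_of_nonneg_left hmoment (by positivity : 0 ≤ L / 2 * γ ^ 2),
    mul_le_mul_of_nonneg_left (hPL xt) hγ.le,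
    mul_le_mul_of_nonneg_right hstep (mul_nonneg hγ.le hgap)]

theorem sd_sgd_one_step_pl {d : ℕ} {Ω : Type*} [MeasureSpace Ω]
    (P : Measure Ω) [IsProbabilityMeasure P]
    (f : EuclideanSpace ℝ (Fin d) → ℝ) (hdiff : Differentiable ℝ f)
    (μ L Lexp γ lam : ℝ) (hμ : 0 < μ) (hL : 0 < L) (hLexp : 0 < Lexp)
    (hγ : 0 < γ) (hγle : γ ≤ μ / (4 * Lexp * L))
    (xstar : EuclideanSpace ℝ (Fin d)) (hmin : ∀ y, f xstar ≤ f y)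
    -- L-smoothness
    (hsmooth : ∀ x y, f y ≤ f x + (inner ℝ (gradient f x) (y - x) : ℝ)
      + L / 2 * ‖y - x‖ ^ 2)
    -- PL condition
    (hPL : ∀ x, ‖gradient f x‖ ^ 2 ≥ 2 * μ * (f x - f xstar))
    (G : Ω → EuclideanSpace ℝ (Fin d) → EuclideanSpace ℝ (Fin d))
    (hGint : ∀ x, Integrable (fun ω => G ω x) P)
    (hG2int : ∀ x y : EuclideanSpace ℝ (Fin d),
      Integrable (fun ω => ‖G ω x - lam • G ω y‖ ^ 2) P)
    (hunbiased : ∀ x, ∫ ω, G ω x ∂P = gradient f x)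
    (hES : ∀ x, ∫ ω, ‖G ω x - G ω xstar‖ ^ 2 ∂P ≤ 2 * Lexp * (f x - f xstar))
    (θ xt : EuclideanSpace ℝ (Fin d))
    (hfint : Integrable (fun ω => f (xt - γ • (G ω xt - lam • G ω θ))) P) :
    ∫ ω, (f (xt - γ • (G ω xt - lam • G ω θ)) - f xstar) ∂P
      ≤ (1 - γ * μ) * (f xt - f xstar)
        + γ * lam ^ 2 * ‖gradient f θ‖ ^ 2
        + L * γ ^ 2 * ∫ ω, ‖G ω xstar - lam • G ω θ‖ ^ 2 ∂P :=
  sd_sgd_one_step_pl_general P f μ L Lexp γ lam hL hLexp hγ hγle xstar hmin hsmooth hPL G hGint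
    hG2int hunbiased hES θ xt hfint
end

section
/- Under the PL condition and expected smoothness, the bias-corrected distillation iterates x^{t+1} = x^t - γ(∇f_ξ(x^t) - ∇f_ξ(θ) + ∇f(θ)) with γ ≤ μ/(3 L L_exp) satisfy the one-step bound E_t[f(x^{t+1}) - f*] ≤ (1-γμ)(f(x^t) - f*) + 3L(L + L_exp)γ²(f(θ) - f*). -/
/-!
The smoothness inequality at `xt`, averaged over the unbiased estimator
`V = G xt - G θ + ∇f θ`, gives `E f(x⁺) ≤ f xt - γ‖∇f xt‖² + (L/2)γ² E‖V‖²`.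
Writing `V = (G xt - G x*) - (G θ - G x*) + ∇f θ`, expected smoothness and
`‖∇f θ‖² ≤ 2L(f θ - f*)` bound `E‖V‖²` by `6 Lexp (f xt - f*) + 6 (Lexp + L)(f θ - f*)`.
By PL the descent term is at least `2γμ(f xt - f*)`, and the step-size condition
`3 L Lexp γ ≤ μ` lets half of it absorb the `f xt - f*` part of the noise.
-/

open MeasureTheory
open scoped RealInnerProductSpace

section QuadraticUpperBound

variable {E : Type*} [NormedAddCommGroup E] [InnerProductSpace ℝ E]
  {f : E → ℝ} {L : ℝ} {x g : E}

theorem norm_sq_le_of_quadratic_upper_bound (hL : 0 < L)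
    (hup : ∀ y, f y ≤ f x + ⟪g, y - x⟫ + L / 2 * ‖y - x‖ ^ 2) {m : ℝ} (hm : ∀ y, m ≤ f y) :
    ‖g‖ ^ 2 ≤ 2 * L * (f x - m) := by
  have hstep := hup (x - L⁻¹ • g)
  rw [sub_sub_cancel_left, inner_neg_right, inner_smul_right, real_inner_self_eq_norm_sq,
    norm_neg, norm_smul, Real.norm_of_nonneg (inv_nonneg.2 hL.le), mul_pow] at hstep
  have hdrop : L⁻¹ * ‖g‖ ^ 2 - L / 2 * (L⁻¹ ^ 2 * ‖g‖ ^ 2) = ‖g‖ ^ 2 / (2 * L) := by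
    field_simp; ring
  have h : ‖g‖ ^ 2 / (2 * L) ≤ f x - m := by linarith [hm (x - L⁻¹ • g)]
  rwa [div_le_iff₀ (by positivity), mul_comm] at h

variable {Ω : Type*} [MeasurableSpace Ω] {P : Measure Ω} [IsProbabilityMeasure P]
  [CompleteSpace E]

theorem integral_le_of_quadratic_upper_bound {γ : ℝ}
    (hup : ∀ y, f y ≤ f x + ⟪g, y - x⟫ + L / 2 * ‖y - x‖ ^ 2)
    {V : Ω → E} (hV : Integrable V P) (hV2 : Integrable (fun ω => ‖V ω‖ ^ 2) P)
    (hmean : ∫ ω, V ω ∂P = g) (hfV : Integrable (fun ω => f (x - γ • V ω)) P) :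
    ∫ ω, f (x - γ • V ω) ∂P ≤ f x - γ * ‖g‖ ^ 2 + L / 2 * γ ^ 2 * ∫ ω, ‖V ω‖ ^ 2 ∂P := by
  have hpt : ∀ ω, f (x - γ • V ω) ≤ f x - γ * ⟪g, V ω⟫ + L / 2 * γ ^ 2 * ‖V ω‖ ^ 2 := by
    intro ω
    have h := hup (x - γ • V ω)
    rw [sub_sub_cancel_left, inner_neg_right, inner_smul_right, norm_neg, norm_smul,
      Real.norm_eq_abs, mul_pow, sq_abs] at h
    linarith
  have hinner : Integrable (fun ω => f x - γ * ⟪g, V ω⟫) P :=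
    (integrable_const _).sub ((hV.const_inner g).const_mul γ)
  calc ∫ ω, f (x - γ • V ω) ∂P
      ≤ ∫ ω, (f x - γ * ⟪g, V ω⟫ + L / 2 * γ ^ 2 * ‖V ω‖ ^ 2) ∂P :=
        integral_mono hfV (hinner.add (hV2.const_mul _)) hpt
    _ = f x - γ * ‖g‖ ^ 2 + L / 2 * γ ^ 2 * ∫ ω, ‖V ω‖ ^ 2 ∂P := by
        rw [integral_add hinner (hV2.const_mul _),
          integral_sub (integrable_const _) ((hV.const_inner g).const_mul γ),
          integral_const_mul, integral_const_mul, integral_inner hV, hmean,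
          real_inner_self_eq_norm_sq, integral_const, probReal_univ, one_smul]

end QuadraticUpperBound

section SecondMoment

variable {E : Type*} [SeminormedAddCommGroup E]

theorem norm_sub_add_sq_le (a b c z : E) :
    ‖a - b + c‖ ^ 2 ≤ 3 * ‖a - z‖ ^ 2 + 3 * ‖b - z‖ ^ 2 + 3 * ‖c‖ ^ 2 := by
  have h : ‖a - b + c‖ ≤ ‖a - z‖ + ‖b - z‖ + ‖c‖ := by
    rw [← sub_sub_sub_cancel_right a b z, sub_eq_add_neg (a - z), ← norm_neg (b - z)]
    exact norm_add₃_le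
  nlinarith [norm_nonneg (a - b + c), sq_nonneg (‖a - z‖ - ‖b - z‖), sq_nonneg (‖a - z‖ - ‖c‖),
    sq_nonneg (‖b - z‖ - ‖c‖)]

variable {Ω : Type*} [MeasurableSpace Ω] {P : Measure Ω} {X Y Z : Ω → E}

theorem integrable_norm_sub_add_sq [IsFiniteMeasure P] (c : E)
    (hX : AEStronglyMeasurable (fun ω => X ω - Z ω) P)
    (hY : AEStronglyMeasurable (fun ω => Y ω - Z ω) P)
    (hX2 : Integrable (fun ω => ‖X ω - Z ω‖ ^ 2) P)
    (hY2 : Integrable (fun ω => ‖Y ω - Z ω‖ ^ 2) P) :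
    Integrable (fun ω => ‖X ω - Y ω + c‖ ^ 2) P := by
  have hbound : Integrable
      (fun ω => 3 * ‖X ω - Z ω‖ ^ 2 + 3 * ‖Y ω - Z ω‖ ^ 2 + 3 * ‖c‖ ^ 2) P :=
    ((hX2.const_mul 3).add (hY2.const_mul 3)).add (integrable_const _)
  have hmeas : AEStronglyMeasurable (fun ω => ‖X ω - Y ω + c‖ ^ 2) P :=
    (((hX.sub hY).add (aestronglyMeasurable_const (b := c))).norm.pow 2).congr <|
      ae_of_all _ fun ω => by
        simp only [Pi.pow_apply, Pi.add_apply, Pi.sub_apply, sub_sub_sub_cancel_right]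
  refine hbound.mono' hmeas (ae_of_all _ fun ω => ?_)
  rw [Real.norm_of_nonneg (by positivity)]
  exact norm_sub_add_sq_le _ _ _ _

theorem integral_norm_sub_add_sq_le [IsProbabilityMeasure P] (c : E)
    (hX : AEStronglyMeasurable (fun ω => X ω - Z ω) P)
    (hY : AEStronglyMeasurable (fun ω => Y ω - Z ω) P)
    (hX2 : Integrable (fun ω => ‖X ω - Z ω‖ ^ 2) P)
    (hY2 : Integrable (fun ω => ‖Y ω - Z ω‖ ^ 2) P) :
    ∫ ω, ‖X ω - Y ω + c‖ ^ 2 ∂P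
      ≤ 3 * ∫ ω, ‖X ω - Z ω‖ ^ 2 ∂P + 3 * ∫ ω, ‖Y ω - Z ω‖ ^ 2 ∂P + 3 * ‖c‖ ^ 2 := by
  have hsum : Integrable (fun ω => 3 * ‖X ω - Z ω‖ ^ 2 + 3 * ‖Y ω - Z ω‖ ^ 2) P :=
    (hX2.const_mul 3).add (hY2.const_mul 3)
  calc ∫ ω, ‖X ω - Y ω + c‖ ^ 2 ∂P
      ≤ ∫ ω, (3 * ‖X ω - Z ω‖ ^ 2 + 3 * ‖Y ω - Z ω‖ ^ 2 + 3 * ‖c‖ ^ 2) ∂P :=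
        integral_mono (integrable_norm_sub_add_sq c hX hY hX2 hY2)
          (hsum.add (integrable_const _)) fun ω => norm_sub_add_sq_le _ _ _ _
    _ = 3 * ∫ ω, ‖X ω - Z ω‖ ^ 2 ∂P + 3 * ∫ ω, ‖Y ω - Z ω‖ ^ 2 ∂P + 3 * ‖c‖ ^ 2 := by
        rw [integral_add hsum (integrable_const _),
          integral_add (hX2.const_mul 3) (hY2.const_mul 3), integral_const_mul,
          integral_const_mul, integral_const, probReal_univ, one_smul]

end SecondMoment

theorem bias_corrected_one_step_pl_general {d : ℕ} {Ω : Type*} [MeasureSpace Ω]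
    (P : Measure Ω) [IsProbabilityMeasure P]
    (f : EuclideanSpace ℝ (Fin d) → ℝ)
    (μ L Lexp γ : ℝ) (hL : 0 < L) (hLexp : 0 < Lexp)
    (hγ : 0 < γ) (hγle : γ ≤ μ / (3 * L * Lexp))
    (xstar : EuclideanSpace ℝ (Fin d)) (hmin : ∀ y, f xstar ≤ f y)
    (hsmooth : ∀ x y, f y ≤ f x + (inner ℝ (gradient f x) (y - x) : ℝ)
      + L / 2 * ‖y - x‖ ^ 2)
    (hPL : ∀ x, ‖gradient f x‖ ^ 2 ≥ 2 * μ * (f x - f xstar))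
    (G : Ω → EuclideanSpace ℝ (Fin d) → EuclideanSpace ℝ (Fin d))
    (hGint : ∀ x, Integrable (fun ω => G ω x) P)
    (hG2int : ∀ x y : EuclideanSpace ℝ (Fin d),
      Integrable (fun ω => ‖G ω x - G ω y‖ ^ 2) P)
    (hunbiased : ∀ x, ∫ ω, G ω x ∂P = gradient f x)
    (hES : ∀ x, ∫ ω, ‖G ω x - G ω xstar‖ ^ 2 ∂P ≤ 2 * Lexp * (f x - f xstar))
    (θ xt : EuclideanSpace ℝ (Fin d))
    (hfint : Integrable
      (fun ω => f (xt - γ • (G ω xt - G ω θ + gradient f θ))) P) :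
    ∫ ω, (f (xt - γ • (G ω xt - G ω θ + gradient f θ)) - f xstar) ∂P
      ≤ (1 - γ * μ) * (f xt - f xstar)
        + 3 * L * (L + Lexp) * γ ^ 2 * (f θ - f xstar) := by
  have hGdiff : Integrable (fun ω => G ω xt - G ω θ) P := (hGint xt).sub (hGint θ)
  have hV : Integrable (fun ω => G ω xt - G ω θ + gradient f θ) P :=
    hGdiff.add (integrable_const _)
  have hmean : ∫ ω, (G ω xt - G ω θ + gradient f θ) ∂P = gradient f xt := by
    rw [integral_add hGdiff (integrable_const _), integral_sub (hGint xt) (hGint θ), hunbiased,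
      hunbiased, integral_const, probReal_univ, one_smul, sub_add_cancel]
  have hmeas : ∀ x, AEStronglyMeasurable (fun ω => G ω x - G ω xstar) P :=
    fun x => ((hGint x).sub (hGint xstar)).aestronglyMeasurable
  have hV2 := integrable_norm_sub_add_sq (gradient f θ) (hmeas xt) (hmeas θ)
    (hG2int xt xstar) (hG2int θ xstar)
  have hmoment := integral_norm_sub_add_sq_le (gradient f θ) (hmeas xt) (hmeas θ)
    (hG2int xt xstar) (hG2int θ xstar)
  have hdescent := integral_le_of_quadratic_upper_bound (hsmooth xt) hV hV2 hmean hfint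
  have hgradθ := norm_sq_le_of_quadratic_upper_bound hL (hsmooth θ) hmin
  have hstep : 3 * L * Lexp * γ ≤ μ := by rwa [le_div_iff₀ (by positivity), mul_comm] at hγle
  have hnoise : ∫ ω, ‖G ω xt - G ω θ + gradient f θ‖ ^ 2 ∂P
      ≤ 6 * Lexp * (f xt - f xstar) + 6 * (Lexp + L) * (f θ - f xstar) := by
    linarith [hES xt, hES θ]
  have hnoiseγ := mul_le_mul_of_nonneg_left hnoise (by positivity : 0 ≤ L / 2 * γ ^ 2)
  have hPLγ := mul_le_mul_of_nonneg_left (hPL xt) hγ.le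
  have hstepγ := mul_le_mul_of_nonneg_right hstep (mul_nonneg hγ.le (sub_nonneg.2 (hmin xt)))
  rw [integral_sub hfint (integrable_const _), integral_const, probReal_univ, one_smul]
  linarith

theorem bias_corrected_one_step_pl {d : ℕ} {Ω : Type*} [MeasureSpace Ω]
    (P : Measure Ω) [IsProbabilityMeasure P]
    (f : EuclideanSpace ℝ (Fin d) → ℝ) (hdiff : Differentiable ℝ f)
    (μ L Lexp γ : ℝ) (hμ : 0 < μ) (hL : 0 < L) (hLexp : 0 < Lexp)
    (hγ : 0 < γ) (hγle : γ ≤ μ / (3 * L * Lexp))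
    (xstar : EuclideanSpace ℝ (Fin d)) (hmin : ∀ y, f xstar ≤ f y)
    (hsmooth : ∀ x y, f y ≤ f x + (inner ℝ (gradient f x) (y - x) : ℝ)
      + L / 2 * ‖y - x‖ ^ 2)
    (hPL : ∀ x, ‖gradient f x‖ ^ 2 ≥ 2 * μ * (f x - f xstar))
    (G : Ω → EuclideanSpace ℝ (Fin d) → EuclideanSpace ℝ (Fin d))
    (hGint : ∀ x, Integrable (fun ω => G ω x) P)
    (hG2int : ∀ x y : EuclideanSpace ℝ (Fin d),
      Integrable (fun ω => ‖G ω x - G ω y‖ ^ 2) P)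
    (hunbiased : ∀ x, ∫ ω, G ω x ∂P = gradient f x)
    (hES : ∀ x, ∫ ω, ‖G ω x - G ω xstar‖ ^ 2 ∂P ≤ 2 * Lexp * (f x - f xstar))
    (θ xt : EuclideanSpace ℝ (Fin d))
    (hfint : Integrable
      (fun ω => f (xt - γ • (G ω xt - G ω θ + gradient f θ))) P) :
    ∫ ω, (f (xt - γ • (G ω xt - G ω θ + gradient f θ)) - f xstar) ∂P
      ≤ (1 - γ * μ) * (f xt - f xstar)
        + 3 * L * (L + Lexp) * γ ^ 2 * (f θ - f xstar) :=
  bias_corrected_one_step_pl_general P f μ L Lexp γ hL hLexp hγ hγle xstar hmin hsmooth hPL G hGint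
    hG2int hunbiased hES θ xt hfint
end

section
/- If f is L-smooth and μ-strongly convex, and δ is a zero-mean square-integrable random vector, then for all x, y: f(y) ≥ f(x) + ⟨E[∇f(x + δ)], y - x⟩ + (μ/2)‖y - x‖² - ((L-μ)/2) E[‖δ‖²]. -/
/-!
Fix `x, y` and a sample `δ`, and compare both `x` and `y` with the perturbed point `z = x + δ`:
smoothness bounds `f x` from above and strong convexity bounds `f y` from below by quadratics
around `z` with the same slope `∇f z`. Subtracting them and expanding `‖y - z‖²` in `δ` gives
`f y ≥ f x + ⟪∇f z, y - x⟫ + μ/2 ‖y - x‖² - μ ⟪y - x, δ⟫ - (L - μ)/2 ‖δ‖²` for every sample;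
the term linear in `δ` vanishes in expectation because `δ` is centred.
-/

open MeasureTheory

open scoped RealInnerProductSpace

theorem lower_bound_of_quadratic_bounds_at {E : Type*} [NormedAddCommGroup E]
    [InnerProductSpace ℝ E] {f : E → ℝ} {L μ : ℝ} {g x y z : E}
    (hx : f x ≤ f z + ⟪g, x - z⟫ + L / 2 * ‖x - z‖ ^ 2)
    (hy : f y ≥ f z + ⟪g, y - z⟫ + μ / 2 * ‖y - z‖ ^ 2) :
    f x + ⟪g, y - x⟫ + μ / 2 * ‖y - x‖ ^ 2 - μ * ⟪y - x, z - x⟫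
      - (L - μ) / 2 * ‖z - x‖ ^ 2 ≤ f y := by
  have hyz : y - z = (y - x) - (z - x) := (sub_sub_sub_cancel_right y z x).symm
  have hxz : x - z = -(z - x) := (neg_sub z x).symm
  rw [hyz, norm_sub_sq_real, inner_sub_right] at hy
  rw [hxz, norm_neg, inner_neg_right] at hx
  linarith

theorem inner_integral_sub_mul_integral_sq_le_of_forall_le {Ω E : Type*} [MeasurableSpace Ω]
    {P : Measure Ω} [IsProbabilityMeasure P] [NormedAddCommGroup E] [InnerProductSpace ℝ E]
    [CompleteSpace E] {g δ : Ω → E} (hg : Integrable g P) (hδ : Integrable δ P)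
    (hδ2 : Integrable (fun ω => ‖δ ω‖ ^ 2) P) (hδmean : ∫ ω, δ ω ∂P = 0) {v : E} {a b c : ℝ}
    (h : ∀ ω, ⟪v, g ω⟫ - a * ⟪v, δ ω⟫ - b * ‖δ ω‖ ^ 2 ≤ c) :
    ⟪v, ∫ ω, g ω ∂P⟫ - b * ∫ ω, ‖δ ω‖ ^ 2 ∂P ≤ c := by
  have hcentred : ∫ ω, ⟪v, δ ω⟫ ∂P = 0 := by
    rw [integral_inner hδ, hδmean, inner_zero_right]
  have hgv := hg.const_inner (𝕜 := ℝ) v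
  have hδv := (hδ.const_inner (𝕜 := ℝ) v).const_mul a
  have hsq := hδ2.const_mul b
  have hlinear : Integrable (fun ω => ⟪v, g ω⟫ - a * ⟪v, δ ω⟫) P := hgv.sub hδv
  have hexpect : ∫ ω, (⟪v, g ω⟫ - a * ⟪v, δ ω⟫ - b * ‖δ ω‖ ^ 2) ∂P ≤ ∫ _ω, c ∂P :=
    integral_mono (hlinear.sub hsq) (integrable_const c) h
  rwa [integral_sub hlinear hsq, integral_sub hgv hδv, integral_const_mul, integral_const_mul,
    integral_inner hg, hcentred, mul_zero, sub_zero, integral_const, probReal_univ,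
    one_smul] at hexpect

theorem strongly_convex_perturbed_lower_bound_general {d : ℕ} {Ω : Type*} [MeasureSpace Ω]
    (P : Measure Ω) [IsProbabilityMeasure P]
    (f : EuclideanSpace ℝ (Fin d) → ℝ)
    (L μ : ℝ)
    (hsmooth : ∀ u v, f u ≤ f v + (inner ℝ (gradient f v) (u - v) : ℝ)
      + L / 2 * ‖u - v‖ ^ 2)
    (hsc : ∀ u v, f u ≥ f v + (inner ℝ (gradient f v) (u - v) : ℝ)
      + μ / 2 * ‖u - v‖ ^ 2)
    (δ : Ω → EuclideanSpace ℝ (Fin d))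
    (hδint : Integrable δ P) (hδ2 : Integrable (fun ω => ‖δ ω‖ ^ 2) P)
    (hδmean : ∫ ω, δ ω ∂P = 0)
    (hgradint : ∀ x, Integrable (fun ω => gradient f (x + δ ω)) P) :
    ∀ x y : EuclideanSpace ℝ (Fin d),
      f y ≥ f x + (inner ℝ (∫ ω, gradient f (x + δ ω) ∂P) (y - x) : ℝ)
        + μ / 2 * ‖y - x‖ ^ 2 - (L - μ) / 2 * ∫ ω, ‖δ ω‖ ^ 2 ∂P := by
  intro x y
  have hpointwise : ∀ ω, ⟪y - x, gradient f (x + δ ω)⟫ - μ * ⟪y - x, δ ω⟫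
      - (L - μ) / 2 * ‖δ ω‖ ^ 2 ≤ f y - f x - μ / 2 * ‖y - x‖ ^ 2 := fun ω => by
    have h := lower_bound_of_quadratic_bounds_at (hsmooth x (x + δ ω)) (hsc y (x + δ ω))
    rw [add_sub_cancel_left, real_inner_comm] at h
    linarith
  have hexpect := inner_integral_sub_mul_integral_sq_le_of_forall_le (hgradint x) hδint hδ2
    hδmean hpointwise
  rw [real_inner_comm] at hexpect
  linarith

theorem strongly_convex_perturbed_lower_bound {d : ℕ} {Ω : Type*} [MeasureSpace Ω]
    (P : Measure Ω) [IsProbabilityMeasure P]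
    (f : EuclideanSpace ℝ (Fin d) → ℝ) (hdiff : Differentiable ℝ f)
    (L μ : ℝ) (hL : 0 < L) (hμ : 0 < μ)
    (hsmooth : ∀ u v, f u ≤ f v + (inner ℝ (gradient f v) (u - v) : ℝ)
      + L / 2 * ‖u - v‖ ^ 2)
    (hsc : ∀ u v, f u ≥ f v + (inner ℝ (gradient f v) (u - v) : ℝ)
      + μ / 2 * ‖u - v‖ ^ 2)
    (δ : Ω → EuclideanSpace ℝ (Fin d))
    (hδint : Integrable δ P) (hδ2 : Integrable (fun ω => ‖δ ω‖ ^ 2) P)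
    (hδmean : ∫ ω, δ ω ∂P = 0)
    (hgradint : ∀ x, Integrable (fun ω => gradient f (x + δ ω)) P)
    (hfint : ∀ x, Integrable (fun ω => f (x + δ ω)) P) :
    ∀ x y : EuclideanSpace ℝ (Fin d),
      f y ≥ f x + (inner ℝ (∫ ω, gradient f (x + δ ω) ∂P) (y - x) : ℝ)
        + μ / 2 * ‖y - x‖ ^ 2 - (L - μ) / 2 * ∫ ω, ‖δ ω‖ ^ 2 ∂P :=
  strongly_convex_perturbed_lower_bound_general P f L μ hsmooth hsc δ hδint hδ2 hδmean hgradint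
end
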